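/- arXiv:1604.03883 — 2 statements merged into one kernel-verified Lean document; each statement's English description precedes it below -/
import Mathlib

section
/- For every w = (w₁,w₂) ∈ 𝔹₂ one has ℬ(w) = m_{w₁}(ℬ((0, w₂/√(1 − |w₁|²)))), i.e. the set ℬ(w) equals the image under the Möbius map m_{w₁} of the set ℬ at the point (0, w₂/√(1 − |w₁|²)). -/
open Metric Set Complex

noncomputable section

/-- `ℂⁿ` with the Euclidean norm; `𝔹ₙ` is `Metric.ball 0 1` in this space. -/
abbrev En (n : ℕ) := EuclideanSpace ℂ (Fin n)

/-- The Möbius map `m_a` interchanging `0` and `a`. -/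
def mob (a z : ℂ) : ℂ := (a - z) / (1 - (starRingEnd ℂ) a * z)

/-- A Blaschke product of degree `k`: `z ↦ η * ∏ j, m_{α j}(z)` with `|η| = 1`, `α j ∈ 𝔻`. -/
def IsBlaschke (k : ℕ) (B : ℂ → ℂ) : Prop :=
  ∃ η : ℂ, ‖η‖ = 1 ∧ ∃ α : Fin k → ℂ, (∀ j, α j ∈ ball (0 : ℂ) 1) ∧
    ∀ z : ℂ, B z = η * ∏ j, mob (α j) z

/-- The Pick problem `𝔹ₙ → 𝔻`, `z j ↦ lam j`, is extremal: it is solvable by a holomorphic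
map `𝔹ₙ → 𝔻`, but by no holomorphic solution with `sup_{𝔹ₙ} |G| < 1`. -/
def ExtremalPick {n : ℕ} {ι : Type} (z : ι → En n) (lam : ι → ℂ) : Prop :=
  (∃ F : En n → ℂ, DifferentiableOn ℂ F (ball 0 1) ∧
      MapsTo F (ball (0 : En n) 1) (ball (0 : ℂ) 1) ∧ ∀ j, F (z j) = lam j) ∧
  ¬ ∃ G : En n → ℂ, DifferentiableOn ℂ G (ball 0 1) ∧ (∀ j, G (z j) = lam j) ∧
      ∃ r : ℝ, r < 1 ∧ ∀ x ∈ ball (0 : En n) 1, ‖G x‖ ≤ r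

/-- An extremal 3-point Pick problem is non-degenerate if no 2-point subproblem is extremal. -/
def ExtremalPick3Nondeg {n : ℕ} (z : Fin 3 → En n) (lam : Fin 3 → ℂ) : Prop :=
  ExtremalPick z lam ∧
    ∀ i j : Fin 3, i ≠ j → ¬ ExtremalPick ![z i, z j] ![lam i, lam j]

/-- `ℬ(w)`: values at `w` of holomorphic maps `F : 𝔹₂ → 𝔻` with `F(z₁,0) = z₁` on `𝔻`. -/
def Bset (w : En 2) : Set ℂ :=
  {σ | ∃ F : En 2 → ℂ, DifferentiableOn ℂ F (ball 0 1) ∧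
    MapsTo F (ball (0 : En 2) 1) (ball (0 : ℂ) 1) ∧
    (∀ z₁ ∈ ball (0 : ℂ) 1, F !₂[z₁, 0] = z₁) ∧ F w = σ}

/-!
Write `s = √(1 - |a|²)`. The map `Φₐ(z₁, z₂) = (mₐ(z₁), s z₂ / (1 - ā z₁))` (`ballMob a`) is a
holomorphic involution of `𝔹₂` which acts as `mₐ` on the slice `{z₂ = 0}` and sends `(0, w₂ / s)`
to `(a, w₂)`. Hence `F ↦ mₐ ∘ F ∘ Φₐ` is an involution of the class of maps defining `ℬ`, and
it turns the value `F(w)` into the value `mₐ(F(w))` at `Φₐ w`. So `ℬ(Φₐ w) = mₐ(ℬ(w))`; now take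
`a = w₁` and `w = (0, w₂ / s)`.
-/

open ComplexConjugate

theorem one_sub_sq_norm_pos {E : Type*} [SeminormedAddCommGroup E] {a : E} (ha : ‖a‖ < 1) :
    0 < 1 - ‖a‖ ^ 2 :=
  sub_pos.2 (pow_lt_one₀ (norm_nonneg a) ha two_ne_zero)

theorem one_sub_conj_mul_ne_zero {a z : ℂ} (ha : ‖a‖ < 1) (hz : ‖z‖ ≤ 1) :
    1 - conj a * z ≠ 0 := by
  refine sub_ne_zero.2 fun h => ?_
  have : ‖conj a * z‖ < 1 := by
    rw [norm_mul, Complex.norm_conj]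
    nlinarith [norm_nonneg a, norm_nonneg z]
  rw [← h, norm_one] at this
  exact lt_irrefl _ this

theorem normSq_one_sub_conj_mul_sub_normSq_sub (a z : ℂ) :
    normSq (1 - conj a * z) - normSq (a - z) = (1 - normSq a) * (1 - normSq z) := by
  simp only [normSq_apply, sub_re, sub_im, mul_re, mul_im, conj_re, conj_im, one_re, one_im]
  ring

theorem norm_mob_lt_one {a z : ℂ} (ha : ‖a‖ < 1) (hz : ‖z‖ < 1) : ‖mob a z‖ < 1 := by
  have hd := one_sub_conj_mul_ne_zero ha hz.le
  rw [mob, norm_div, div_lt_one (norm_pos_iff.2 hd), ← sq_lt_sq₀ (norm_nonneg _) (norm_nonneg _),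
    Complex.sq_norm, Complex.sq_norm, ← sub_pos, normSq_one_sub_conj_mul_sub_normSq_sub,
    ← Complex.sq_norm, ← Complex.sq_norm]
  exact mul_pos (one_sub_sq_norm_pos ha) (one_sub_sq_norm_pos hz)

theorem mapsTo_mob {a : ℂ} (ha : ‖a‖ < 1) : MapsTo (mob a) (ball 0 1) (ball 0 1) := by
  intro z hz
  rw [mem_ball_zero_iff] at hz ⊢
  exact norm_mob_lt_one ha hz

theorem sub_mob {a z : ℂ} (hd : 1 - conj a * z ≠ 0) :
    a - mob a z = (1 - conj a * a) * z / (1 - conj a * z) := by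
  rw [mob, eq_div_iff hd, sub_mul, div_mul_cancel₀ _ hd]
  ring

theorem one_sub_conj_mul_mob {a z : ℂ} (hd : 1 - conj a * z ≠ 0) :
    1 - conj a * mob a z = (1 - conj a * a) / (1 - conj a * z) := by
  rw [mob, eq_div_iff hd, sub_mul, mul_assoc, div_mul_cancel₀ _ hd]
  ring

theorem mob_mob {a z : ℂ} (ha : ‖a‖ < 1) (hz : ‖z‖ < 1) : mob a (mob a z) = z := by
  have hd := one_sub_conj_mul_ne_zero ha hz.le
  have haa := one_sub_conj_mul_ne_zero ha ha.le
  rw [mob, sub_mob hd, one_sub_conj_mul_mob hd]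
  field_simp

theorem differentiableOn_mob {a : ℂ} (ha : ‖a‖ < 1) :
    DifferentiableOn ℂ (mob a) (ball 0 1) := by
  intro z hz
  rw [mem_ball_zero_iff] at hz
  unfold mob
  fun_prop (disch := exact one_sub_conj_mul_ne_zero ha hz.le)

theorem mem_ball_two_iff (z : En 2) : z ∈ ball (0 : En 2) 1 ↔ ‖z 0‖ ^ 2 + ‖z 1‖ ^ 2 < 1 := by
  rw [mem_ball_zero_iff, EuclideanSpace.norm_eq, Real.sqrt_lt' one_pos, Fin.sum_univ_two]
  simp

theorem norm_apply_zero_lt_one {z : En 2} (hz : z ∈ ball (0 : En 2) 1) : ‖z 0‖ < 1 := by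
  rw [mem_ball_two_iff] at hz
  nlinarith [norm_nonneg (z 0), sq_nonneg ‖z 1‖]

theorem En.ext_two {z w : En 2} (h₀ : z 0 = w 0) (h₁ : z 1 = w 1) : z = w :=
  PiLp.ext (Fin.forall_fin_two.2 ⟨h₀, h₁⟩)

@[fun_prop]
theorem En.differentiable_apply {n : ℕ} (i : Fin n) : Differentiable ℂ fun z : En n => z i :=
  (EuclideanSpace.proj i : En n →L[ℂ] ℂ).differentiable

theorem sq_ofReal_sqrt_one_sub_sq_norm {a : ℂ} (ha : ‖a‖ < 1) :
    ((√(1 - ‖a‖ ^ 2) : ℝ) : ℂ) ^ 2 = 1 - conj a * a := by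
  rw [← ofReal_pow, Real.sq_sqrt (one_sub_sq_norm_pos ha).le, Complex.conj_mul']
  push_cast
  rfl

def ballMob (a : ℂ) (z : En 2) : En 2 :=
  !₂[mob a (z 0), ((√(1 - ‖a‖ ^ 2) : ℝ) : ℂ) * z 1 / (1 - conj a * z 0)]

@[simp] theorem ballMob_apply_zero (a : ℂ) (z : En 2) : ballMob a z 0 = mob a (z 0) := rfl

@[simp] theorem ballMob_apply_one (a : ℂ) (z : En 2) :
    ballMob a z 1 = ((√(1 - ‖a‖ ^ 2) : ℝ) : ℂ) * z 1 / (1 - conj a * z 0) := rfl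

theorem ballMob_ballMob {a : ℂ} (ha : ‖a‖ < 1) {z : En 2} (hz : ‖z 0‖ < 1) :
    ballMob a (ballMob a z) = z := by
  have hd := one_sub_conj_mul_ne_zero ha hz.le
  have haa := one_sub_conj_mul_ne_zero ha ha.le
  refine En.ext_two (mob_mob ha hz) ?_
  rw [ballMob_apply_one, ballMob_apply_one, ballMob_apply_zero, one_sub_conj_mul_mob hd]
  field_simp
  rw [sq_ofReal_sqrt_one_sub_sq_norm ha]
  field_simp

theorem mapsTo_ballMob {a : ℂ} (ha : ‖a‖ < 1) :
    MapsTo (ballMob a) (ball (0 : En 2) 1) (ball (0 : En 2) 1) := by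
  intro z hz
  have hd := one_sub_conj_mul_ne_zero ha (norm_apply_zero_lt_one hz).le
  have hs := one_sub_sq_norm_pos ha
  have key := normSq_one_sub_conj_mul_sub_normSq_sub a (z 0)
  simp only [← Complex.sq_norm] at key
  rw [mem_ball_two_iff] at hz ⊢
  rw [ballMob_apply_zero, ballMob_apply_one, mob, norm_div, norm_div, div_pow, div_pow,
    ← add_div, div_lt_one (by positivity), norm_mul, mul_pow, norm_real,
    Real.norm_of_nonneg (Real.sqrt_nonneg _), Real.sq_sqrt hs.le]
  linarith [mul_lt_mul_of_pos_left (lt_sub_iff_add_lt'.2 hz) hs]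

theorem differentiableOn_ballMob {a : ℂ} (ha : ‖a‖ < 1) :
    DifferentiableOn ℂ (ballMob a) (ball (0 : En 2) 1) := by
  intro z hz
  have hd := one_sub_conj_mul_ne_zero ha (norm_apply_zero_lt_one hz).le
  refine ((differentiableAt_piLp 2).2 (Fin.forall_fin_two.2 ⟨?_, ?_⟩)).differentiableWithinAt
  · simp only [ballMob_apply_zero, mob]
    fun_prop (disch := exact hd)
  · simp only [ballMob_apply_one]
    fun_prop (disch := exact hd)

theorem ballMob_slice (a z₁ : ℂ) : ballMob a !₂[z₁, 0] = !₂[mob a z₁, 0] :=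
  En.ext_two rfl (by simp)

theorem ballMob_zero_slice {a : ℂ} (ha : ‖a‖ < 1) (v : ℂ) :
    ballMob a !₂[0, v / ((√(1 - ‖a‖ ^ 2) : ℝ) : ℂ)] = !₂[a, v] := by
  have hs := one_sub_sq_norm_pos ha
  refine En.ext_two (by simp [mob]) ?_
  simp [mul_div_cancel₀, (Real.sqrt_pos.2 hs).ne']

theorem Bset_subset_ball {w : En 2} (hw : w ∈ ball (0 : En 2) 1) : Bset w ⊆ ball 0 1 := by
  rintro _ ⟨F, -, hF, -, rfl⟩
  exact hF hw

theorem mob_mem_Bset_ballMob {a : ℂ} (ha : ‖a‖ < 1) {w : En 2} (hw : ‖w 0‖ < 1) {σ : ℂ}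
    (hσ : σ ∈ Bset w) : mob a σ ∈ Bset (ballMob a w) := by
  obtain ⟨F, hFd, hFm, hFs, rfl⟩ := hσ
  refine ⟨fun z => mob a (F (ballMob a z)),
    (differentiableOn_mob ha).comp (hFd.comp (differentiableOn_ballMob ha) (mapsTo_ballMob ha))
      (hFm.comp (mapsTo_ballMob ha)),
    (mapsTo_mob ha).comp (hFm.comp (mapsTo_ballMob ha)), fun z₁ hz₁ => ?_,
    by simp only [ballMob_ballMob ha hw]⟩
  have hz₁' := mem_ball_zero_iff.1 hz₁
  simp only [ballMob_slice, hFs _ (mapsTo_mob ha hz₁), mob_mob ha hz₁']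

theorem Bset_ballMob {a : ℂ} (ha : ‖a‖ < 1) {w : En 2} (hw : w ∈ ball (0 : En 2) 1) :
    Bset (ballMob a w) = mob a '' Bset w := by
  refine Subset.antisymm (fun σ hσ => ⟨mob a σ, ?_, ?_⟩)
    (image_subset_iff.2 fun σ => mob_mem_Bset_ballMob ha (norm_apply_zero_lt_one hw))
  · simpa only [ballMob_ballMob ha (norm_apply_zero_lt_one hw)] using
      mob_mem_Bset_ballMob ha (norm_apply_zero_lt_one (mapsTo_ballMob ha hw)) hσ
  · exact mob_mob ha (mem_ball_zero_iff.1 (Bset_subset_ball (mapsTo_ballMob ha hw) hσ))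

/-- `ℬ(w) = m_{w₁}(ℬ(0, w₂/√(1 − |w₁|²)))`. -/
theorem stmt_6 (w : En 2) (hw : w ∈ ball (0 : En 2) 1) :
    Bset w = mob (w 0) ''
      Bset !₂[0, w 1 / ((Real.sqrt (1 - ‖w 0‖ ^ 2) : ℝ) : ℂ)] := by
  have ha := norm_apply_zero_lt_one hw
  set w' : En 2 := !₂[0, w 1 / ((Real.sqrt (1 - ‖w 0‖ ^ 2) : ℝ) : ℂ)]
  have hw' : ballMob (w 0) w' = w := (ballMob_zero_slice ha (w 1)).trans (En.ext_two rfl rfl)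
  have hw'_mem : w' ∈ ball (0 : En 2) 1 := by
    rw [← ballMob_ballMob ha (z := w') (by simp [w']), hw']
    exact mapsTo_ballMob ha hw
  rw [← Bset_ballMob ha hw'_mem, hw']
end
end

section
/- Let a ∈ [0,1), b := √(1 − a²), and define F(z) := (z₁² + 2bz₂)/(2 − a²) for z = (z₁,z₂) ∈ 𝔹₂. Then |F(z)| < 1 for every z ∈ 𝔹₂, and F(aλ, bλ²) = λ² for every λ ∈ 𝔻. -/
open Metric Set Complex

noncomputable section

/-! By the triangle inequality and `2b|z₂| ≤ b² + |z₂|²`, on the ball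
`|z₁² + 2bz₂| ≤ |z₁|² + |z₂|² + b² < 1 + b² = 2 - a²`. On the curve `(aλ, bλ²)` the numerator is
`(a² + 2b²)λ² = (2 - a²)λ²`. -/

theorem norm_sq_add_two_mul_le (z w : ℂ) {b : ℝ} (hb : 0 ≤ b) :
    ‖z ^ 2 + 2 * (b : ℂ) * w‖ ≤ ‖z‖ ^ 2 + ‖w‖ ^ 2 + b ^ 2 :=
  calc ‖z ^ 2 + 2 * (b : ℂ) * w‖
      ≤ ‖z ^ 2‖ + ‖2 * (b : ℂ) * w‖ := norm_add_le _ _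
    _ = ‖z‖ ^ 2 + 2 * b * ‖w‖ := by
        rw [norm_pow, norm_mul, norm_mul, Complex.norm_two, Complex.norm_of_nonneg hb]
    _ ≤ ‖z‖ ^ 2 + ‖w‖ ^ 2 + b ^ 2 := by nlinarith [sq_nonneg (‖w‖ - b)]

theorem EuclideanSpace.norm_sq_add_norm_sq_lt_one {z : EuclideanSpace ℂ (Fin 2)}
    (hz : z ∈ ball (0 : EuclideanSpace ℂ (Fin 2)) 1) : ‖z 0‖ ^ 2 + ‖z 1‖ ^ 2 < 1 := by
  have hz2 : ‖z‖ ^ 2 < 1 := by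
    have := mem_ball_zero_iff.mp hz
    nlinarith [norm_nonneg z]
  rwa [EuclideanSpace.norm_sq_eq, Fin.sum_univ_two] at hz2

theorem norm_sq_add_two_mul_lt_of_mem_ball {z : EuclideanSpace ℂ (Fin 2)}
    (hz : z ∈ ball (0 : EuclideanSpace ℂ (Fin 2)) 1) {b : ℝ} (hb : 0 ≤ b) :
    ‖z 0 ^ 2 + 2 * (b : ℂ) * z 1‖ < 1 + b ^ 2 := by
  linarith [norm_sq_add_two_mul_le (z 0) (z 1) hb,
    EuclideanSpace.norm_sq_add_norm_sq_lt_one hz]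

/-- for `a ∈ [0,1)`, `b := √(1−a²)`, `F(z) := (z₁² + 2bz₂)/(2 − a²)` satisfies
`|F| < 1` on `𝔹₂` and `F(aλ, bλ²) = λ²` for `λ ∈ 𝔻`. -/
theorem stmt_8 (a : ℝ) (ha : a ∈ Ico (0 : ℝ) 1) (b : ℝ) (hb : b = Real.sqrt (1 - a ^ 2))
    (F : En 2 → ℂ) (hFdef : ∀ z : En 2, F z = ((z 0) ^ 2 + 2 * (b : ℂ) * z 1) / (2 - (a : ℂ) ^ 2)) :
    (∀ z ∈ ball (0 : En 2) 1, ‖F z‖ < 1) ∧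
    ∀ lam ∈ ball (0 : ℂ) 1, F (WithLp.toLp 2 ![(a : ℂ) * lam, (b : ℂ) * lam ^ 2]) = lam ^ 2 := by
  have hb0 : 0 ≤ b := hb ▸ Real.sqrt_nonneg _
  have hb2 : b ^ 2 = 1 - a ^ 2 := by
    rw [hb, Real.sq_sqrt]
    nlinarith [ha.1, ha.2]
  have hden : (2 : ℂ) - (a : ℂ) ^ 2 = ((1 + b ^ 2 : ℝ) : ℂ) := by
    push_cast [hb2]
    ring
  have hden_pos : 0 < 1 + b ^ 2 := by positivity
  refine ⟨fun z hz => ?_, fun lam _ => ?_⟩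
  · rw [hFdef, norm_div, hden, Complex.norm_of_nonneg hden_pos.le, div_lt_one hden_pos]
    exact norm_sq_add_two_mul_lt_of_mem_ball hz hb0
  · have hden_ne : (2 : ℂ) - (a : ℂ) ^ 2 ≠ 0 := by
      rw [hden]
      exact_mod_cast hden_pos.ne'
    rw [hFdef, div_eq_iff hden_ne]
    have hbC : (b : ℂ) ^ 2 = 1 - (a : ℂ) ^ 2 := by exact_mod_cast hb2
    change (a * lam) ^ 2 + 2 * (b : ℂ) * (b * lam ^ 2) = _
    linear_combination 2 * lam ^ 2 * hbC
end
end
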